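/- arXiv:2112.01239 — 3 statements merged into one kernel-verified Lean document; each statement's English description precedes it below -/
import Mathlib

section
/- (i) The uniformized chain of the OEF CTMC is irreducible: for all states x, y ∈ S there exists k ∈ ℕ such that (Pᵏ)(x,y) > 0. (ii) The OEF CTMC admits a stationary distribution: there exists Π : S → ℝ with Π(x) ≥ 0 for all x, ∑_{x ∈ S} Π(x) = 1, and ∑_{x ∈ S} Π(x) · Q(x,y) = 0 for all y ∈ S. -/
open scoped BigOperators

noncomputable def Qoff (n M : ℕ) (lam : Fin n → ℝ) (mu : ℝ)
    (x y : Fin n → Fin (M+1)) : ℝ :=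
  (∑ j : Fin n,
      if (y j : ℕ) = (x j : ℕ) + 1 ∧ (∀ k, k ≠ j → y k = x k) then lam j else 0)
  + (if y = (fun _ => 0) ∧ x ≠ (fun _ => 0) then mu else 0)

noncomputable def Qgen (n M : ℕ) (lam : Fin n → ℝ) (mu : ℝ)
    (x y : Fin n → Fin (M+1)) : ℝ :=
  if x = y then -∑ z ∈ Finset.univ.erase x, Qoff n M lam mu x z
  else Qoff n M lam mu x y

noncomputable def QbarOff (M : ℕ) (lam mu : ℝ) (a b : Fin (M+1)) : ℝ :=
  (if (b : ℕ) = (a : ℕ) + 1 then lam else 0) + (if b = 0 ∧ a ≠ 0 then mu else 0)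

noncomputable def Qbar (M : ℕ) (lam mu : ℝ) (a b : Fin (M+1)) : ℝ :=
  if a = b then -∑ c ∈ Finset.univ.erase a, QbarOff M lam mu a c
  else QbarOff M lam mu a b

noncomputable def Pmat (n M : ℕ) (lam : Fin n → ℝ) (mu qhat : ℝ) :
    Matrix (Fin n → Fin (M+1)) (Fin n → Fin (M+1)) ℝ :=
  1 + qhat⁻¹ • Matrix.of (Qgen n M lam mu)

noncomputable def PbarMat (M : ℕ) (lam mu qhat : ℝ) :
    Matrix (Fin (M+1)) (Fin (M+1)) ℝ :=
  1 + qhat⁻¹ • Matrix.of (Qbar M lam mu)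

noncomputable def delta0 (n M : ℕ) : (Fin n → Fin (M+1)) → ℝ :=
  fun x => if x = (fun _ => 0) then 1 else 0

noncomputable def delta0bar (M : ℕ) : Fin (M+1) → ℝ :=
  fun a => if a = 0 then 1 else 0

noncomputable def transientP (n M : ℕ) (lam : Fin n → ℝ) (mu qhat t : ℝ)
    (x : Fin n → Fin (M+1)) : ℝ :=
  ∑' k : ℕ, Real.exp (-(qhat * t)) * (qhat * t) ^ k / (Nat.factorial k) *
    Matrix.vecMul (delta0 n M) ((Pmat n M lam mu qhat) ^ k) x

noncomputable def transientPbar (M : ℕ) (lam mu qhat t : ℝ) (a : Fin (M+1)) : ℝ :=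
  ∑' k : ℕ, Real.exp (-(qhat * t)) * (qhat * t) ^ k / (Nat.factorial k) *
    Matrix.vecMul (delta0bar M) ((PbarMat M lam mu qhat) ^ k) a

/-!
Every state is reached from `0` by single student arrivals and returns to `0` by one instructor
arrival, so all states communicate in the uniformized chain, whose entries are nonnegative because
`q̂` dominates the exit rates.

A state `y ≠ 0` is entered only from its predecessors `y - e_j`, so the balance equations at
`y ≠ 0`, `w y * q(y) = ∑ j, λ_j * w (y - e_j)`, are solved by recursion on `∑ j, y_j` starting from
`w 0 = 1`. As the rows of `Q` sum to zero, balance at `0` follows, and normalising `w` gives `Π`.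
-/

open Finset Relation

namespace Matrix

variable {ι : Type*} [DecidableEq ι]

theorem exists_pow_apply_pos_of_reflTransGen [Fintype ι] {R : Type*} [Ring R] [LinearOrder R]
    [IsOrderedRing R] [PosMulStrictMono R] [Nontrivial R] {A : Matrix ι ι R}
    (hA : ∀ i j, 0 ≤ A i j) {i j : ι} (h : ReflTransGen (fun a b => 0 < A a b) i j) :
    ∃ k, 0 < (A ^ k) i j := by
  let := toQuiver A
  obtain ⟨p⟩ : Nonempty (Quiver.Path i j) := by
    induction h with
    | refl => exact ⟨.nil⟩
    | tail _ hbc ih => exact ih.map fun p => p.cons ⟨hbc⟩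
  exact ⟨p.length, (pow_apply_pos_iff_nonempty_path hA _ i j).2 ⟨⟨p, rfl⟩⟩⟩

variable {K : Type*} [Field K] [LinearOrder K] [IsStrictOrderedRing K]
  {Q : Matrix ι ι K} {q : K}

theorem one_add_inv_smul_apply_nonneg (hq : 0 < q) (hoff : ∀ x y, x ≠ y → 0 ≤ Q x y)
    (hdiag : ∀ x, -Q x x ≤ q) (x y : ι) : 0 ≤ (1 + q⁻¹ • Q) x y := by
  rcases eq_or_ne x y with rfl | hxy
  · have : -1 ≤ q⁻¹ * Q x x := by
      rw [le_inv_mul_iff₀ hq]; linarith [hdiag x]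
    simp only [add_apply, one_apply_eq, smul_apply, smul_eq_mul]
    linarith
  · simp only [add_apply, one_apply_ne hxy, smul_apply, smul_eq_mul, zero_add]
    exact mul_nonneg (inv_nonneg.2 hq.le) (hoff x y hxy)

theorem one_add_inv_smul_apply_pos_of_ne (hq : 0 < q) {x y : ι} (hxy : x ≠ y)
    (hQ : 0 < Q x y) : 0 < (1 + q⁻¹ • Q) x y := by
  simp only [add_apply, one_apply_ne hxy, smul_apply, smul_eq_mul, zero_add]
  exact mul_pos (inv_pos.2 hq) hQ

end Matrix

section Generator

variable {ι : Type*} [Fintype ι]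

theorem sum_mul_apply_eq_zero_of_forall_ne [DecidableEq ι] {R : Type*}
    [NonUnitalNonAssocSemiring R] {G : ι → ι → R} (hrow : ∀ x, ∑ y, G x y = 0)
    (v : ι → R) {y₀ : ι} (h : ∀ y ≠ y₀, ∑ x, v x * G x y = 0) :
    ∑ x, v x * G x y₀ = 0 := by
  have htotal : ∑ y, ∑ x, v x * G x y = 0 := by
    rw [sum_comm]
    simp [← mul_sum, hrow]
  rwa [← add_sum_erase _ _ (mem_univ y₀),
    sum_eq_zero fun y hy => h y (ne_of_mem_erase hy), add_zero] at htotal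

theorem exists_stationary_of_nonneg {K : Type*} [Field K] [LinearOrder K]
    [IsStrictOrderedRing K] {G : ι → ι → K} {v : ι → K} (hv : ∀ x, 0 ≤ v x)
    (hsum : 0 < ∑ x, v x) (hbal : ∀ y, ∑ x, v x * G x y = 0) :
    ∃ p : ι → K, (∀ x, 0 ≤ p x) ∧ ∑ x, p x = 1 ∧ ∀ y, ∑ x, p x * G x y = 0 := by
  refine ⟨fun x => v x / ∑ z, v z, fun x => div_nonneg (hv x) hsum.le, ?_, fun y => ?_⟩
  · rw [← sum_div, div_self hsum.ne']
  · simp_rw [div_mul_eq_mul_div, ← sum_div, hbal y, zero_div]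

end Generator

section OEF

variable {n M : ℕ}

def predAt (j : Fin n) (y : Fin n → Fin (M+1)) : Fin n → Fin (M+1) :=
  Function.update y j ⟨y j - 1, by omega⟩

theorem predAt_apply_self (j : Fin n) (y : Fin n → Fin (M+1)) :
    (predAt j y j : ℕ) = y j - 1 := by
  simp [predAt]

theorem predAt_apply_of_ne {j k : Fin n} (y : Fin n → Fin (M+1)) (hk : k ≠ j) :
    predAt j y k = y k := by
  simp [predAt, hk]

theorem increment_iff_eq_predAt {j : Fin n} {x y : Fin n → Fin (M+1)} :
    ((y j : ℕ) = x j + 1 ∧ ∀ k, k ≠ j → y k = x k) ↔ (y j : ℕ) ≠ 0 ∧ x = predAt j y := by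
  constructor
  · rintro ⟨hj, hk⟩
    refine ⟨by omega, funext fun k => ?_⟩
    rcases eq_or_ne k j with rfl | hkj
    · exact Fin.ext (by rw [predAt_apply_self]; omega)
    · rw [predAt_apply_of_ne y hkj, hk k hkj]
  · rintro ⟨hj, rfl⟩
    exact ⟨by rw [predAt_apply_self]; omega, fun k hk => (predAt_apply_of_ne y hk).symm⟩

theorem sum_predAt_add_one {j : Fin n} {y : Fin n → Fin (M+1)} (hj : (y j : ℕ) ≠ 0) :
    ∑ k, (predAt j y k : ℕ) + 1 = ∑ k, (y k : ℕ) := by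
  rw [← add_sum_erase _ _ (mem_univ j), ← add_sum_erase _ (fun k => (y k : ℕ)) (mem_univ j),
    sum_congr rfl fun k hk => by rw [predAt_apply_of_ne y (ne_of_mem_erase hk)],
    predAt_apply_self]
  omega

theorem predAt_induction {motive : (Fin n → Fin (M+1)) → Prop}
    (step : ∀ y, (∀ j, (y j : ℕ) ≠ 0 → motive (predAt j y)) → motive y)
    (y : Fin n → Fin (M+1)) : motive y := by
  induction hs : ∑ k, (y k : ℕ) using Nat.strong_induction_on generalizing y with
  | _ s ih =>
    exact step y fun j hj => ih _ (hs ▸ sum_predAt_add_one hj ▸ Nat.lt_succ_self _) _ rfl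

theorem exists_val_ne_zero {y : Fin n → Fin (M+1)} (hy : y ≠ fun _ => 0) :
    ∃ j, (y j : ℕ) ≠ 0 := by
  obtain ⟨j, hj⟩ := Function.ne_iff.1 hy
  exact ⟨j, Fin.val_ne_zero_iff.2 hj⟩

variable {lam : Fin n → ℝ} {mu : ℝ}

theorem Qoff_self (x : Fin n → Fin (M+1)) : Qoff n M lam mu x x = 0 := by
  simp [Qoff]

theorem Qoff_nonneg (hlam : ∀ j, 0 < lam j) (hmu : 0 < mu) (x y : Fin n → Fin (M+1)) :
    0 ≤ Qoff n M lam mu x y := by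
  unfold Qoff
  refine add_nonneg (sum_nonneg fun j _ => ?_) ?_ <;> split_ifs
  exacts [(hlam j).le, le_rfl, hmu.le, le_rfl]

theorem Qoff_of_ne_zero {x y : Fin n → Fin (M+1)} (hy : y ≠ fun _ => 0) :
    Qoff n M lam mu x y = ∑ j, if (y j : ℕ) ≠ 0 ∧ x = predAt j y then lam j else 0 := by
  simp only [Qoff, increment_iff_eq_predAt, hy, false_and, if_false, add_zero]

theorem mu_le_Qoff_zero (hlam : ∀ j, 0 < lam j) {x : Fin n → Fin (M+1)}
    (hx : x ≠ fun _ => 0) : mu ≤ Qoff n M lam mu x (fun _ => 0) := by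
  rw [Qoff, if_pos ⟨rfl, hx⟩, le_add_iff_nonneg_left]
  refine sum_nonneg fun j _ => ?_
  split_ifs
  exacts [(hlam j).le, le_rfl]

theorem lam_le_Qoff_predAt (hlam : ∀ j, 0 < lam j) (hmu : 0 < mu) {j : Fin n}
    {y : Fin n → Fin (M+1)} (hj : (y j : ℕ) ≠ 0) : lam j ≤ Qoff n M lam mu (predAt j y) y := by
  have hjump : lam j ≤ ∑ i, if (y i : ℕ) = predAt j y i + 1 ∧
      ∀ k, k ≠ i → y k = predAt j y k then lam i else 0 := by
    refine le_of_eq_of_le ?_ (single_le_sum (fun i _ => ?_) (mem_univ j))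
    · rw [if_pos (increment_iff_eq_predAt.2 ⟨hj, rfl⟩)]
    · split_ifs
      exacts [(hlam i).le, le_rfl]
  have hreset : (0 : ℝ) ≤ if y = (fun _ => 0) ∧ predAt j y ≠ (fun _ => 0) then mu else 0 := by
    split_ifs
    exacts [hmu.le, le_rfl]
  rw [Qoff]
  linarith

noncomputable def exitRate (lam : Fin n → ℝ) (mu : ℝ) (x : Fin n → Fin (M+1)) : ℝ :=
  ∑ z, Qoff n M lam mu x z

theorem exitRate_pos (hlam : ∀ j, 0 < lam j) (hmu : 0 < mu) {x : Fin n → Fin (M+1)}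
    (hx : x ≠ fun _ => 0) : 0 < exitRate lam mu x :=
  calc 0 < mu := hmu
    _ ≤ Qoff n M lam mu x (fun _ => 0) := mu_le_Qoff_zero hlam hx
    _ ≤ exitRate lam mu x := single_le_sum (fun z _ => Qoff_nonneg hlam hmu x z) (mem_univ _)

theorem Qgen_eq (x y : Fin n → Fin (M+1)) :
    Qgen n M lam mu x y = Qoff n M lam mu x y - if x = y then exitRate lam mu x else 0 := by
  rw [Qgen]
  split_ifs with hxy
  · subst hxy
    rw [exitRate, sum_erase _ (Qoff_self x), Qoff_self, zero_sub]
  · rw [sub_zero]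

theorem sum_Qgen_eq_zero (x : Fin n → Fin (M+1)) : ∑ y, Qgen n M lam mu x y = 0 := by
  simp [Qgen_eq, sum_sub_distrib, exitRate]

theorem Qgen_nonneg_of_ne (hlam : ∀ j, 0 < lam j) (hmu : 0 < mu) {x y : Fin n → Fin (M+1)}
    (hxy : x ≠ y) : 0 ≤ Qgen n M lam mu x y := by
  rw [Qgen_eq, if_neg hxy, sub_zero]
  exact Qoff_nonneg hlam hmu x y

theorem Qgen_pos_of_ne {x y : Fin n → Fin (M+1)} (hxy : x ≠ y) (h : 0 < Qoff n M lam mu x y) :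
    0 < Qgen n M lam mu x y := by
  rwa [Qgen_eq, if_neg hxy, sub_zero]

theorem reflTransGen_zero_Pmat_pos (hlam : ∀ j, 0 < lam j) (hmu : 0 < mu) {qhat : ℝ}
    (hq : 0 < qhat) (y : Fin n → Fin (M+1)) :
    ReflTransGen (fun a b => 0 < Pmat n M lam mu qhat a b) (fun _ => 0) y := by
  induction y using predAt_induction with
  | step y ih =>
    by_cases hy : y = fun _ => 0
    · rw [hy]
    obtain ⟨j, hj⟩ := exists_val_ne_zero hy
    have hne : predAt j y ≠ y := fun h => by
      have := congrArg (fun z => (z j : ℕ)) h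
      simp only [predAt_apply_self] at this
      omega
    exact (ih j hj).tail <| Matrix.one_add_inv_smul_apply_pos_of_ne hq hne <|
      Qgen_pos_of_ne hne <| (hlam j).trans_le (lam_le_Qoff_predAt hlam hmu hj)

theorem reflTransGen_Pmat_pos (hlam : ∀ j, 0 < lam j) (hmu : 0 < mu) {qhat : ℝ}
    (hq : 0 < qhat) (x y : Fin n → Fin (M+1)) :
    ReflTransGen (fun a b => 0 < Pmat n M lam mu qhat a b) x y := by
  refine ReflTransGen.trans ?_ (reflTransGen_zero_Pmat_pos hlam hmu hq y)
  by_cases hx : x = fun _ => 0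
  · rw [hx]
  exact .single <| Matrix.one_add_inv_smul_apply_pos_of_ne hq hx <|
    Qgen_pos_of_ne hx <| hmu.trans_le (mu_le_Qoff_zero hlam hx)

noncomputable def stationaryWeight (lam : Fin n → ℝ) (mu : ℝ) (y : Fin n → Fin (M+1)) : ℝ :=
  if y = (fun _ => 0) then 1 else
    (∑ j, if h : (y j : ℕ) = 0 then 0 else lam j * stationaryWeight lam mu (predAt j y)) /
      exitRate lam mu y
termination_by ∑ k, (y k : ℕ)
decreasing_by have := sum_predAt_add_one h; omega

theorem stationaryWeight_nonneg (hlam : ∀ j, 0 < lam j) (hmu : 0 < mu)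
    (y : Fin n → Fin (M+1)) : 0 ≤ stationaryWeight lam mu y := by
  induction y using predAt_induction with
  | step y ih =>
    rw [stationaryWeight]
    split_ifs with hy
    · exact zero_le_one
    refine div_nonneg (sum_nonneg fun j _ => ?_) (exitRate_pos hlam hmu hy).le
    split_ifs with hj
    exacts [le_rfl, mul_nonneg (hlam j).le (ih j hj)]

theorem sum_stationaryWeight_pos (hlam : ∀ j, 0 < lam j) (hmu : 0 < mu) :
    0 < ∑ y : Fin n → Fin (M+1), stationaryWeight lam mu y := by
  refine zero_lt_one.trans_le (le_of_eq_of_le ?_ (single_le_sum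
    (fun y _ => stationaryWeight_nonneg hlam hmu y) (mem_univ fun _ => 0)))
  rw [stationaryWeight, if_pos rfl]

theorem sum_mul_Qoff_of_ne_zero (v : (Fin n → Fin (M+1)) → ℝ) {y : Fin n → Fin (M+1)}
    (hy : y ≠ fun _ => 0) :
    ∑ x, v x * Qoff n M lam mu x y = ∑ j, if (y j : ℕ) = 0 then 0 else lam j * v (predAt j y) := by
  simp_rw [Qoff_of_ne_zero hy, mul_sum]
  rw [sum_comm]
  refine sum_congr rfl fun j _ => ?_
  by_cases hj : (y j : ℕ) = 0 <;> simp [hj, mul_comm]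

theorem sum_stationaryWeight_mul_Qgen_of_ne_zero (hlam : ∀ j, 0 < lam j) (hmu : 0 < mu)
    {y : Fin n → Fin (M+1)} (hy : y ≠ fun _ => 0) :
    ∑ x, stationaryWeight lam mu x * Qgen n M lam mu x y = 0 := by
  have hw : stationaryWeight lam mu y * exitRate lam mu y =
      ∑ j, if (y j : ℕ) = 0 then 0 else lam j * stationaryWeight lam mu (predAt j y) := by
    rw [stationaryWeight, if_neg hy, div_mul_cancel₀ _ (exitRate_pos hlam hmu hy).ne']
    simp only [dite_eq_ite]
  simp_rw [Qgen_eq, mul_sub, sum_sub_distrib, mul_ite, mul_zero, sum_ite_eq', if_pos (mem_univ _),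
    sum_mul_Qoff_of_ne_zero _ hy, hw, sub_self]

theorem sum_stationaryWeight_mul_Qgen (hlam : ∀ j, 0 < lam j) (hmu : 0 < mu)
    (y : Fin n → Fin (M+1)) : ∑ x, stationaryWeight lam mu x * Qgen n M lam mu x y = 0 := by
  by_cases hy : y = fun _ => 0
  · exact hy ▸ sum_mul_apply_eq_zero_of_forall_ne sum_Qgen_eq_zero _
      fun y hy => sum_stationaryWeight_mul_Qgen_of_ne_zero hlam hmu hy
  · exact sum_stationaryWeight_mul_Qgen_of_ne_zero hlam hmu hy

end OEF

theorem oef_ctmc_irreducible_and_stationary_general (n M : ℕ)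
    (lam : Fin n → ℝ) (hlam : ∀ j, 0 < lam j) (mu : ℝ) (hmu : 0 < mu)
    (qhat : ℝ) (hq : 0 < qhat)
    (hqbound : ∀ x : Fin n → Fin (M+1), -(Qgen n M lam mu x x) ≤ qhat) :
    (∀ x y : Fin n → Fin (M+1), ∃ k : ℕ, 0 < ((Pmat n M lam mu qhat) ^ k) x y)
    ∧
    (∃ Pi : (Fin n → Fin (M+1)) → ℝ,
      (∀ x, 0 ≤ Pi x) ∧ (∑ x, Pi x = 1) ∧
      (∀ y, ∑ x, Pi x * Qgen n M lam mu x y = 0)) := by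
  have hP : ∀ x y, 0 ≤ Pmat n M lam mu qhat x y :=
    Matrix.one_add_inv_smul_apply_nonneg hq (fun _ _ => Qgen_nonneg_of_ne hlam hmu) hqbound
  exact ⟨fun x y => Matrix.exists_pow_apply_pos_of_reflTransGen hP
      (reflTransGen_Pmat_pos hlam hmu hq x y),
    exists_stationary_of_nonneg (stationaryWeight_nonneg hlam hmu)
      (sum_stationaryWeight_pos hlam hmu) (sum_stationaryWeight_mul_Qgen hlam hmu)⟩

/-- (i) The uniformized chain `P = I + Q/q̂` of the OEF CTMC is
irreducible, and (ii) the OEF CTMC admits a stationary distribution. -/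
theorem oef_ctmc_irreducible_and_stationary (n M : ℕ) (hn : 1 ≤ n) (hM : 1 ≤ M)
    (lam : Fin n → ℝ) (hlam : ∀ j, 0 < lam j) (mu : ℝ) (hmu : 0 < mu)
    (qhat : ℝ) (hq : 0 < qhat)
    (hqbound : ∀ x : Fin n → Fin (M+1), -(Qgen n M lam mu x x) ≤ qhat) :
    (∀ x y : Fin n → Fin (M+1), ∃ k : ℕ, 0 < ((Pmat n M lam mu qhat) ^ k) x y)
    ∧
    (∃ Pi : (Fin n → Fin (M+1)) → ℝ,
      (∀ x, 0 ≤ Pi x) ∧ (∑ x, Pi x = 1) ∧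
      (∀ y, ∑ x, Pi x * Qgen n M lam mu x y = 0)) :=
  oef_ctmc_irreducible_and_stationary_general n M lam hlam mu hmu qhat hq hqbound
end

section
/- Fix a student i ∈ {1,…,n}. If Π : S → ℝ is a stationary distribution of the OEF CTMC (Π(x) ≥ 0 for all x, ∑_{x ∈ S} Π(x) = 1, and ∑_{x ∈ S} Π(x)·Q(x,y) = 0 for all y ∈ S), then the block-sum vector Π̄ᵢ defined by Π̄ᵢ(a) = ∑_{x ∈ S : x_i = a} Π(x) is a stationary distribution of the lumped chain: Π̄ᵢ(a) ≥ 0 for all a, ∑_{a=0}^{M} Π̄ᵢ(a) = 1, and ∑_{a=0}^{M} Π̄ᵢ(a)·Q̄ᵢ(a,b) = 0 for all b ∈ {0,…,M}. -/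
open scoped BigOperators

/-! The `i`-th coordinate of the OEF chain is itself Markov: from every state `x`, the total rate
into the block `{y | y i = b}` is `Q̄ᵢ(x i, b)` (an arrival of student `i` or an instructor
reset), so summing the stationarity equations of `Π` over the blocks gives those of `Π̄ᵢ`. -/

open Finset

section Lumping

variable {α β : Type*} [Fintype α] [Fintype β] [DecidableEq β]

theorem stationary_lump_of_lumpable (G : α → α → ℝ) (Gbar : β → β → ℝ) (φ : α → β)
    (hG : ∀ x b, ∑ y ∈ univ.filter (fun y => φ y = b), G x y = Gbar (φ x) b)
    (π : α → ℝ) (hpos : ∀ x, 0 ≤ π x) (hsum : ∑ x, π x = 1)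
    (hstat : ∀ y, ∑ x, π x * G x y = 0) :
    (∀ a, 0 ≤ ∑ x ∈ univ.filter (fun x => φ x = a), π x)
    ∧ (∑ a, ∑ x ∈ univ.filter (fun x => φ x = a), π x = 1)
    ∧ (∀ b, ∑ a, (∑ x ∈ univ.filter (fun x => φ x = a), π x) * Gbar a b = 0) := by
  refine ⟨fun a => sum_nonneg fun x _ => hpos x, (sum_fiberwise univ φ π).trans hsum, ?_⟩
  intro b
  calc ∑ a, (∑ x ∈ univ.filter (fun x => φ x = a), π x) * Gbar a b
      = ∑ x, π x * Gbar (φ x) b := by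
        rw [← sum_fiberwise univ φ (fun x => π x * Gbar (φ x) b)]
        refine sum_congr rfl fun a _ => ?_
        rw [sum_mul]
        exact sum_congr rfl fun x hx => by rw [(mem_filter.mp hx).2]
    _ = ∑ x, π x * ∑ y ∈ univ.filter (fun y => φ y = b), G x y := by simp_rw [hG]
    _ = ∑ y ∈ univ.filter (fun y => φ y = b), ∑ x, π x * G x y := by
        simp_rw [mul_sum]; exact sum_comm
    _ = 0 := sum_eq_zero fun y _ => hstat y

variable [DecidableEq α]

/-- `Qgen n M lam mu` and `Qbar M lam mu` are, by definition, `generator` of `Qoff n M lam mu`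
and of `QbarOff M lam mu`. -/
noncomputable def generator (f : α → α → ℝ) (x y : α) : ℝ :=
  if x = y then -∑ z ∈ univ.erase x, f x z else f x y

theorem sum_generator_eq_zero (f : α → α → ℝ) (x : α) : ∑ y, generator f x y = 0 := by
  rw [← add_sum_erase univ _ (mem_univ x), generator, if_pos rfl, neg_add_eq_zero]
  exact sum_congr rfl fun y hy => (if_neg (ne_of_mem_erase hy).symm).symm

/-- Only the off-diagonal blocks need checking: the diagonal one follows because the rows of
both generators sum to zero. -/
theorem sum_filter_generator_of_lumpable (f : α → α → ℝ) (fbar : β → β → ℝ) (φ : α → β)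
    (hf : ∀ x b, b ≠ φ x → ∑ y ∈ univ.filter (fun y => φ y = b), f x y = fbar (φ x) b)
    (x : α) (b : β) :
    ∑ y ∈ univ.filter (fun y => φ y = b), generator f x y = generator fbar (φ x) b := by
  have hoff : ∀ c ∈ univ.erase (φ x),
      ∑ y ∈ univ.filter (fun y => φ y = c), generator f x y = generator fbar (φ x) c := by
    intro c hc
    have hc : c ≠ φ x := ne_of_mem_erase hc
    rw [generator, if_neg hc.symm, ← hf x c hc]
    refine sum_congr rfl fun y hy => if_neg ?_
    rintro rfl
    exact hc (mem_filter.mp hy).2.symm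
  by_cases hb : b = φ x
  · subst hb
    have hrow := sum_fiberwise univ φ (generator f x)
    rw [sum_generator_eq_zero, ← sum_generator_eq_zero fbar (φ x),
      ← add_sum_erase univ _ (mem_univ (φ x)), ← add_sum_erase univ _ (mem_univ (φ x)),
      sum_congr rfl hoff] at hrow
    exact add_right_cancel hrow
  · exact hoff b (mem_erase.mpr ⟨hb, mem_univ b⟩)

end Lumping

section OEF

variable {n M : ℕ}

theorem arrival_into_block_iff {i j : Fin n} {x y : Fin n → Fin (M+1)} {b : Fin (M+1)}
    (hb : b ≠ x i) :
    (y i = b ∧ (y j : ℕ) = x j + 1 ∧ ∀ k, k ≠ j → y k = x k)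
      ↔ y = Function.update x i b ∧ j = i ∧ (b : ℕ) = x i + 1 := by
  constructor
  · rintro ⟨rfl, hj, hother⟩
    obtain rfl : j = i := by_contra fun hji => hb (hother i (Ne.symm hji))
    exact ⟨funext fun k => by by_cases hk : k = j <;> simp [hk, hother], rfl, hj⟩
  · rintro ⟨rfl, rfl, hj⟩
    exact ⟨by simp, by simpa using hj, fun k hk => Function.update_of_ne hk _ _⟩

theorem reset_into_block_iff {i : Fin n} {x y : Fin n → Fin (M+1)} {b : Fin (M+1)}
    (hb : b ≠ x i) :
    (y i = b ∧ y = (fun _ => 0) ∧ x ≠ (fun _ => 0))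
      ↔ y = (fun _ => 0) ∧ b = 0 ∧ x i ≠ 0 := by
  constructor
  · rintro ⟨rfl, rfl, -⟩
    exact ⟨rfl, rfl, Ne.symm hb⟩
  · rintro ⟨rfl, rfl, hx⟩
    exact ⟨rfl, rfl, fun h => hx (congrFun h i)⟩

theorem sum_filter_Qoff (lam : Fin n → ℝ) (mu : ℝ) (i : Fin n) (x : Fin n → Fin (M+1))
    (b : Fin (M+1)) (hb : b ≠ x i) :
    ∑ y ∈ univ.filter (fun y => y i = b), Qoff n M lam mu x y = QbarOff M (lam i) mu (x i) b := by
  simp only [Qoff, sum_add_distrib]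
  rw [sum_comm]
  simp only [sum_filter, ← ite_and, arrival_into_block_iff hb, reset_into_block_iff hb]
  simp [ite_and, QbarOff]

end OEF

theorem stationary_dist_lumped_of_stationary_general (n M : ℕ)
    (lam : Fin n → ℝ) (mu : ℝ)
    (i : Fin n)
    (Pi : (Fin n → Fin (M+1)) → ℝ)
    (hpos : ∀ x, 0 ≤ Pi x) (hsum : ∑ x, Pi x = 1)
    (hstat : ∀ y, ∑ x, Pi x * Qgen n M lam mu x y = 0) :
    (∀ a : Fin (M+1), 0 ≤ ∑ x ∈ Finset.univ.filter (fun x => x i = a), Pi x)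
    ∧ (∑ a : Fin (M+1), ∑ x ∈ Finset.univ.filter (fun x => x i = a), Pi x = 1)
    ∧ (∀ b : Fin (M+1),
        ∑ a : Fin (M+1),
          (∑ x ∈ Finset.univ.filter (fun x => x i = a), Pi x) * Qbar M (lam i) mu a b = 0) :=
  stationary_lump_of_lumpable (Qgen n M lam mu) (Qbar M (lam i) mu) (fun x => x i)
    (sum_filter_generator_of_lumpable (Qoff n M lam mu) (QbarOff M (lam i) mu) (fun x => x i)
      (sum_filter_Qoff lam mu i))
    Pi hpos hsum hstat

/-- If `Π` is a stationary distribution of the OEF CTMC, then the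
block-sum vector `Π̄ᵢ(a) = ∑_{x : xᵢ = a} Π(x)` is a stationary distribution of the
lumped chain of student `i`. -/
theorem stationary_dist_lumped_of_stationary (n M : ℕ) (hn : 1 ≤ n) (hM : 1 ≤ M)
    (lam : Fin n → ℝ) (hlam : ∀ j, 0 < lam j) (mu : ℝ) (hmu : 0 < mu)
    (i : Fin n)
    (Pi : (Fin n → Fin (M+1)) → ℝ)
    (hpos : ∀ x, 0 ≤ Pi x) (hsum : ∑ x, Pi x = 1)
    (hstat : ∀ y, ∑ x, Pi x * Qgen n M lam mu x y = 0) :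
    (∀ a : Fin (M+1), 0 ≤ ∑ x ∈ Finset.univ.filter (fun x => x i = a), Pi x)
    ∧ (∑ a : Fin (M+1), ∑ x ∈ Finset.univ.filter (fun x => x i = a), Pi x = 1)
    ∧ (∀ b : Fin (M+1),
        ∑ a : Fin (M+1),
          (∑ x ∈ Finset.univ.filter (fun x => x i = a), Pi x) * Qbar M (lam i) mu a b = 0) :=
  stationary_dist_lumped_of_stationary_general n M lam mu i Pi hpos hsum hstat
end

section
/- For every T ≥ 0: (a) the expected transient aggregate net reward of student i over [0,T] is the same whether computed in the original chain or in its lumped chain: ∫_0^T ∑_{x ∈ S} R^{l,i}(x)·π^t(x) dt = ∫_0^T ∑_{a=0}^{M} R̄^{l,i}(a)·π̄ᵢ^t(a) dt; (b) the expected transient aggregate net reward of the instructor over [0,T] in the original chain equals the c-weighted sum over the n lumped chains: ∫_0^T ∑_{x ∈ S} R^I(x)·π^t(x) dt = ∑_{i=1}^{n} c_i · ∫_0^T ∑_{a=0}^{M} (a·δ^{ln μ} − β)·π̄ᵢ^t(a) dt. -/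
open scoped BigOperators

/-!
Projecting a state `x` of the OEF chain onto the level `x i` of student `i` is a strong lumping
of the uniformized chain: from every state `x`, the `P`-probability of jumping into the fibre
`{y | y i = b}` is `P̄ᵢ (x i) b`, since an arrival of student `i` raises `x i` by one, arrivals of
other students leave it alone, and the instructor resets it to `0`. With the `0/1` lumping matrix
`L` this reads `P L = L P̄ᵢ`, so `δ₀ Pᵏ L = δ̄₀ P̄ᵢᵏ` for every `k`, and a reward depending on `x`
only through `x i` has the same expectation under `δ₀ Pᵏ` and under `δ̄₀ P̄ᵢᵏ`. The Poisson-weighted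
series converge absolutely for any matrix, `(v Pᵏ)(x)` growing at most geometrically in `k`, so the
identity passes to the transient distributions for every `t`, which gives (a). The instructor's
reward is a `c`-weighted sum of rewards of this kind, and the transient distributions are
continuous in `t`, so (b) follows by linearity of the integral.
-/

open Finset Matrix

section FiniteSums

variable {ι G : Type*} [Fintype ι] [DecidableEq ι] [AddCommGroup G]

lemma sum_ite_neg_sum_erase_eq_zero (r : ι → G) (x : ι) :
    ∑ y, (if x = y then -∑ z ∈ univ.erase x, r z else r y) = 0 := by
  rw [← add_sum_erase _ _ (mem_univ x), if_pos rfl,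
    sum_congr rfl fun y hy => if_neg (ne_of_mem_erase hy).symm, neg_add_cancel]

lemma eq_of_sum_eq_of_forall_ne {u w : ι → G} (hsum : ∑ b, u b = ∑ b, w b) (a : ι)
    (h : ∀ b, b ≠ a → u b = w b) : u a = w a := by
  rw [← add_sum_erase _ _ (mem_univ a), ← add_sum_erase _ _ (mem_univ a),
    sum_congr rfl fun b hb => h b (ne_of_mem_erase hb)] at hsum
  exact add_right_cancel hsum

end FiniteSums

section Lumping

variable {S T R : Type*} [CommRing R] [Fintype T] [DecidableEq T]

variable (R) in
def lumpMatrix (φ : S → T) : Matrix S T R := Matrix.of fun x a => if φ x = a then 1 else 0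

lemma lumpMatrix_mulVec (φ : S → T) (f : T → R) : lumpMatrix R φ *ᵥ f = f ∘ φ := by
  ext x
  simp [lumpMatrix, mulVec, dotProduct]

lemma lumpMatrix_mul_apply (φ : S → T) (B : Matrix T T R) (x : S) (b : T) :
    (lumpMatrix R φ * B) x b = B (φ x) b := by
  simp [lumpMatrix, mul_apply]

lemma sum_comp_mul_eq_sum_mul_vecMul_lumpMatrix [Fintype S] (φ : S → T) (f : T → R)
    (w : S → R) : ∑ x, f (φ x) * w x = ∑ a, f a * (w ᵥ* lumpMatrix R φ) a := by
  have := dotProduct_mulVec w (lumpMatrix R φ) f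
  rwa [lumpMatrix_mulVec, dotProduct_comm, dotProduct_comm _ f] at this

lemma sum_mul_lumpMatrix_apply [Fintype S] (A : Matrix S S R) (φ : S → T) (x : S) :
    ∑ b, (A * lumpMatrix R φ) x b = ∑ y, A x y := by
  simp only [mul_apply]
  rw [sum_comm]
  simp [lumpMatrix]

lemma mul_lumpMatrix_eq_lumpMatrix_mul_of_ne [Fintype S] {φ : S → T} {A : Matrix S S R}
    {B : Matrix T T R} (hA : ∀ x, ∑ y, A x y = 0) (hB : ∀ a, ∑ b, B a b = 0)
    (h : ∀ x b, b ≠ φ x → (A * lumpMatrix R φ) x b = B (φ x) b) :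
    A * lumpMatrix R φ = lumpMatrix R φ * B := by
  ext x b
  rw [lumpMatrix_mul_apply]
  by_cases hb : b = φ x
  · subst hb
    exact eq_of_sum_eq_of_forall_ne (by rw [sum_mul_lumpMatrix_apply, hA, hB]) _ (h x)
  · exact h x b hb

variable [Fintype S] [DecidableEq S] {φ : S → T} {A : Matrix S S R} {B : Matrix T T R}

lemma vecMul_pow_mul_lumpMatrix (h : A * lumpMatrix R φ = lumpMatrix R φ * B) (v : S → R)
    (k : ℕ) : v ᵥ* A ^ k ᵥ* lumpMatrix R φ = v ᵥ* lumpMatrix R φ ᵥ* B ^ k := by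
  suffices hk : A ^ k * lumpMatrix R φ = lumpMatrix R φ * B ^ k by
    rw [vecMul_vecMul, vecMul_vecMul, hk]
  induction k with
  | zero => rw [pow_zero, pow_zero, Matrix.one_mul, Matrix.mul_one]
  | succ k ih =>
    rw [pow_succ, Matrix.mul_assoc, h, ← Matrix.mul_assoc, ih, Matrix.mul_assoc, ← pow_succ]

lemma one_add_smul_mul_lumpMatrix (h : A * lumpMatrix R φ = lumpMatrix R φ * B) (c : R) :
    (1 + c • A) * lumpMatrix R φ = lumpMatrix R φ * (1 + c • B) := by
  rw [Matrix.add_mul, Matrix.mul_add, Matrix.one_mul, Matrix.mul_one, Matrix.smul_mul,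
    Matrix.mul_smul, h]

end Lumping

section Uniformization

variable {S : Type*} [Fintype S] [DecidableEq S]

noncomputable def uniformization (v : S → ℝ) (P : Matrix S S ℝ) (q t : ℝ) (x : S) : ℝ :=
  ∑' k : ℕ, Real.exp (-(q * t)) * (q * t) ^ k / k.factorial * (v ᵥ* P ^ k) x

lemma abs_vecMul_pow_apply_le (v : S → ℝ) (P : Matrix S S ℝ) (k : ℕ) (x : S) :
    |(v ᵥ* P ^ k) x| ≤ (∑ y, |v y|) * (∑ y, ∑ z, |P y z|) ^ k := by
  induction k generalizing x with
  | zero =>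
    rw [pow_zero, pow_zero, mul_one, vecMul_one]
    exact single_le_sum (f := fun y => |v y|) (fun y _ => abs_nonneg _) (mem_univ x)
  | succ k ih =>
    rw [pow_succ, ← vecMul_vecMul]
    calc |(v ᵥ* P ^ k ᵥ* P) x| ≤ ∑ y, |(v ᵥ* P ^ k) y| * |P y x| := by
          simpa only [vecMul, dotProduct, abs_mul] using
            abs_sum_le_sum_abs (fun y => (v ᵥ* P ^ k) y * P y x) univ
      _ ≤ ∑ y, (∑ y, |v y|) * (∑ y, ∑ z, |P y z|) ^ k * ∑ z, |P y z| := by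
          gcongr with y
          · exact ih y
          · exact single_le_sum (fun z _ => abs_nonneg (P y z)) (mem_univ x)
      _ = (∑ y, |v y|) * (∑ y, ∑ z, |P y z|) ^ (k + 1) := by
          rw [← mul_sum, pow_succ, mul_assoc]

lemma norm_uniformization_term_le (v : S → ℝ) (P : Matrix S S ℝ) {q t r : ℝ} (ht : |t| ≤ r)
    (k : ℕ) (x : S) :
    ‖Real.exp (-(q * t)) * (q * t) ^ k / k.factorial * (v ᵥ* P ^ k) x‖ ≤
      Real.exp (|q| * r) * (∑ y, |v y|) * ((|q| * r * ∑ y, ∑ z, |P y z|) ^ k / k.factorial) := by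
  have hqt : |q * t| ≤ |q| * r := by rw [abs_mul]; gcongr
  have hqr : 0 ≤ |q| * r := (abs_nonneg _).trans hqt
  have hexp : Real.exp (-(q * t)) ≤ Real.exp (|q| * r) :=
    Real.exp_le_exp.2 ((neg_le_abs _).trans hqt)
  rw [Real.norm_eq_abs, abs_mul, abs_div, abs_mul, abs_pow, Nat.abs_cast, Real.abs_exp]
  calc Real.exp (-(q * t)) * |q * t| ^ k / k.factorial * |(v ᵥ* P ^ k) x|
      ≤ Real.exp (|q| * r) * (|q| * r) ^ k / k.factorial *
          ((∑ y, |v y|) * (∑ y, ∑ z, |P y z|) ^ k) :=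
        mul_le_mul (by gcongr) (abs_vecMul_pow_apply_le v P k x) (abs_nonneg _)
          (by have := pow_nonneg hqr k; positivity)
    _ = _ := by ring

lemma summable_uniformization_term (v : S → ℝ) (P : Matrix S S ℝ) (q t : ℝ) (x : S) :
    Summable fun k : ℕ => Real.exp (-(q * t)) * (q * t) ^ k / k.factorial * (v ᵥ* P ^ k) x :=
  .of_norm_bounded ((Real.summable_pow_div_factorial _).mul_left _)
    fun k => norm_uniformization_term_le v P le_rfl k x

lemma continuous_uniformization (v : S → ℝ) (P : Matrix S S ℝ) (q : ℝ) (x : S) :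
    Continuous fun t => uniformization v P q t x := by
  have hIcc (r : ℝ) : ContinuousOn (fun t => uniformization v P q t x) (Set.Icc (-r) r) :=
    continuousOn_tsum (fun k => by fun_prop) ((Real.summable_pow_div_factorial _).mul_left _)
      fun k t ht => norm_uniformization_term_le v P (abs_le.2 ht) k x
  refine continuous_iff_continuousAt.2 fun t =>
    (hIcc (|t| + 1)).continuousAt (Icc_mem_nhds ?_ ?_)
  · linarith [neg_abs_le t]
  · linarith [le_abs_self t]

theorem sum_comp_mul_uniformization {T : Type*} [Fintype T] [DecidableEq T] {φ : S → T}
    {A : Matrix S S ℝ} {B : Matrix T T ℝ} (h : A * lumpMatrix ℝ φ = lumpMatrix ℝ φ * B)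
    (v : S → ℝ) (f : T → ℝ) (q t : ℝ) :
    ∑ x, f (φ x) * uniformization v A q t x =
      ∑ a, f a * uniformization (v ᵥ* lumpMatrix ℝ φ) B q t a := by
  simp only [uniformization, ← tsum_mul_left]
  rw [← Summable.tsum_finsetSum fun x _ => (summable_uniformization_term v A q t x).mul_left _,
    ← Summable.tsum_finsetSum fun a _ => (summable_uniformization_term _ B q t a).mul_left _]
  refine tsum_congr fun k => ?_
  simp only [mul_left_comm (f _), ← mul_sum]
  rw [sum_comp_mul_eq_sum_mul_vecMul_lumpMatrix, vecMul_pow_mul_lumpMatrix h]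

end Uniformization

section OEF

variable {n M : ℕ} (lam : Fin n → ℝ) (mu : ℝ)

lemma sum_ite_Qoff_eq_QbarOff (i : Fin n) (x : Fin n → Fin (M+1)) {b : Fin (M+1)}
    (hb : b ≠ x i) :
    ∑ y, (if y i = b then Qoff n M lam mu x y else 0) = QbarOff M (lam i) mu (x i) b := by
  have hjump (j : Fin n) (y : Fin n → Fin (M+1)) :
      (y i = b ∧ (y j : ℕ) = x j + 1 ∧ ∀ k, k ≠ j → y k = x k) ↔
        ((b : ℕ) = x i + 1 ∧ j = i) ∧ y = Function.update x i b := by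
    constructor
    · rintro ⟨rfl, hj, hk⟩
      obtain rfl : j = i := by_contra fun h => hb (hk i (Ne.symm h))
      refine ⟨⟨hj, rfl⟩, funext fun k => ?_⟩
      by_cases hkj : k = j
      · simp [hkj]
      · simp [hkj, hk k hkj]
    · rintro ⟨⟨hb1, rfl⟩, rfl⟩
      exact ⟨by simp, by simpa using hb1, fun k hk => Function.update_of_ne hk _ _⟩
  have hreset (y : Fin n → Fin (M+1)) :
      (y i = b ∧ y = (fun _ => 0) ∧ x ≠ (fun _ => 0)) ↔
        (b = 0 ∧ x i ≠ 0) ∧ y = (fun _ => 0) := by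
    constructor
    · rintro ⟨rfl, rfl, -⟩
      exact ⟨⟨rfl, Ne.symm hb⟩, rfl⟩
    · rintro ⟨⟨rfl, hx⟩, rfl⟩
      exact ⟨rfl, rfl, fun h => hx (congrFun h i)⟩
  calc ∑ y, (if y i = b then Qoff n M lam mu x y else 0)
      = ∑ y, ((∑ j, if y i = b ∧ (y j : ℕ) = x j + 1 ∧ (∀ k, k ≠ j → y k = x k)
            then lam j else 0)
          + if y i = b ∧ y = (fun _ => 0) ∧ x ≠ (fun _ => 0) then mu else 0) := by
        refine sum_congr rfl fun y _ => ?_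
        simp only [Qoff, ite_and (y i = b), sum_ite_irrel, sum_const_zero, ite_add_ite, add_zero]
    _ = QbarOff M (lam i) mu (x i) b := by
        simp only [hjump, hreset, ite_and, sum_add_distrib]
        rw [sum_comm]
        simp [QbarOff, ite_and]

lemma Qgen_mul_lumpMatrix (i : Fin n) :
    Matrix.of (Qgen n M lam mu) * lumpMatrix ℝ (fun x : Fin n → Fin (M+1) => x i) =
      lumpMatrix ℝ (fun x : Fin n → Fin (M+1) => x i) * Matrix.of (Qbar M (lam i) mu) := by
  refine mul_lumpMatrix_eq_lumpMatrix_mul_of_ne (fun x => sum_ite_neg_sum_erase_eq_zero _ x)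
    (fun a => sum_ite_neg_sum_erase_eq_zero _ a) fun x b hb => ?_
  rw [of_apply, Qbar, if_neg hb.symm, ← sum_ite_Qoff_eq_QbarOff lam mu i x hb, mul_apply]
  refine sum_congr rfl fun y _ => ?_
  by_cases hy : y i = b
  · have hxy : x ≠ y := fun h => hb (h ▸ hy.symm)
    simp [lumpMatrix, hy, Qgen, hxy]
  · simp [lumpMatrix, hy]

lemma Pmat_mul_lumpMatrix (qhat : ℝ) (i : Fin n) :
    Pmat n M lam mu qhat * lumpMatrix ℝ (fun x : Fin n → Fin (M+1) => x i) =
      lumpMatrix ℝ (fun x : Fin n → Fin (M+1) => x i) * PbarMat M (lam i) mu qhat :=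
  one_add_smul_mul_lumpMatrix (Qgen_mul_lumpMatrix lam mu i) qhat⁻¹

lemma delta0_vecMul_lumpMatrix (i : Fin n) :
    delta0 n M ᵥ* lumpMatrix ℝ (fun x : Fin n → Fin (M+1) => x i) = delta0bar M := by
  ext a
  simp only [vecMul, dotProduct, delta0, lumpMatrix, of_apply, ite_mul, one_mul, zero_mul]
  rw [sum_ite_eq', if_pos (mem_univ _)]
  simp [delta0bar, eq_comm]

lemma sum_comp_apply_mul_transientP (qhat : ℝ) (i : Fin n) (f : Fin (M+1) → ℝ) (t : ℝ) :
    ∑ x, f (x i) * transientP n M lam mu qhat t x =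
      ∑ a, f a * transientPbar M (lam i) mu qhat t a := by
  have := sum_comp_mul_uniformization (Pmat_mul_lumpMatrix lam mu qhat i) (delta0 n M) f qhat t
  rwa [delta0_vecMul_lumpMatrix] at this

end OEF

theorem expected_transient_aggregate_net_rewards_eq_general (n M : ℕ) (lam : Fin n → ℝ) (mu : ℝ)
    (qhat : ℝ) (i : Fin n) (alpha : ℝ) (m : ℕ) (beta : ℝ) (delta : ℝ) (c : Fin n → ℝ) :
    ∀ T : ℝ, 0 ≤ T →
      ((∫ t in (0:ℝ)..T,
          ∑ x : Fin n → Fin (M+1),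
            (((min (x i : ℕ) m : ℕ) : ℝ) * delta ^ Real.log mu - alpha * ((x i : ℕ) : ℝ))
              * transientP n M lam mu qhat t x)
        = ∫ t in (0:ℝ)..T,
            ∑ a : Fin (M+1),
              (((min (a : ℕ) m : ℕ) : ℝ) * delta ^ Real.log mu - alpha * ((a : ℕ) : ℝ))
                * transientPbar M (lam i) mu qhat t a)
      ∧
      ((∫ t in (0:ℝ)..T,
          ∑ x : Fin n → Fin (M+1),
            (∑ j, c j * (((x j : ℕ) : ℝ) * delta ^ Real.log mu - beta))
              * transientP n M lam mu qhat t x)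
        = ∑ j, c j *
            ∫ t in (0:ℝ)..T,
              ∑ a : Fin (M+1),
                (((a : ℕ) : ℝ) * delta ^ Real.log mu - beta)
                  * transientPbar M (lam j) mu qhat t a) := by
  intro T _
  refine ⟨intervalIntegral.integral_congr fun t _ => sum_comp_apply_mul_transientP lam mu qhat i
    (fun a => ((min (a : ℕ) m : ℕ) : ℝ) * delta ^ Real.log mu - alpha * (a : ℕ)) t, ?_⟩
  set g : Fin (M+1) → ℝ := fun a => (a : ℕ) * delta ^ Real.log mu - beta
  have hpointwise (t : ℝ) :
      ∑ x : Fin n → Fin (M+1), (∑ j, c j * g (x j)) * transientP n M lam mu qhat t x =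
        ∑ j, c j * ∑ a, g a * transientPbar M (lam j) mu qhat t a := by
    simp only [sum_mul, mul_assoc]
    rw [sum_comm]
    simp only [← mul_sum, sum_comp_apply_mul_transientP]
  have hcont (j : Fin n) : Continuous fun t => ∑ a, g a * transientPbar M (lam j) mu qhat t a :=
    continuous_finsetSum _ fun a _ => (continuous_uniformization _ _ _ a).const_mul _
  rw [intervalIntegral.integral_congr fun t _ => hpointwise t,
    intervalIntegral.integral_finsetSum fun j _ => ((hcont j).const_mul _).intervalIntegrable _ _]
  exact sum_congr rfl fun j _ => intervalIntegral.integral_const_mul _ _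

/-- For every `T ≥ 0`: (a) the expected transient aggregate net
reward of student `i` over `[0,T]` is the same in the original OEF chain and in its
lumped chain; (b) the instructor's expected transient aggregate net reward over
`[0,T]` in the original chain equals the `c`-weighted sum over the `n` lumped chains. -/
theorem expected_transient_aggregate_net_rewards_eq (n M : ℕ) (hn : 1 ≤ n) (hM : 1 ≤ M)
    (lam : Fin n → ℝ) (hlam : ∀ j, 0 < lam j) (mu : ℝ) (hmu : 0 < mu)
    (qhat : ℝ) (hq : 0 < qhat)
    (hqbound : ∀ x : Fin n → Fin (M+1), -(Qgen n M lam mu x x) ≤ qhat)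
    (i : Fin n) (alpha : ℝ) (halpha : 0 < alpha ∧ alpha < 1)
    (m : ℕ) (hm : 1 ≤ m ∧ m ≤ M)
    (beta : ℝ) (hbeta : 0 < beta ∧ beta < 1)
    (delta : ℝ) (hdelta : 0 < delta ∧ delta < 1)
    (c : Fin n → ℝ) (hc : ∀ j, 0 ≤ c j ∧ c j ≤ 1) (hcsum : ∑ j, c j = 1) :
    ∀ T : ℝ, 0 ≤ T →
      ((∫ t in (0:ℝ)..T,
          ∑ x : Fin n → Fin (M+1),
            (((min (x i : ℕ) m : ℕ) : ℝ) * delta ^ Real.log mu - alpha * ((x i : ℕ) : ℝ))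
              * transientP n M lam mu qhat t x)
        = ∫ t in (0:ℝ)..T,
            ∑ a : Fin (M+1),
              (((min (a : ℕ) m : ℕ) : ℝ) * delta ^ Real.log mu - alpha * ((a : ℕ) : ℝ))
                * transientPbar M (lam i) mu qhat t a)
      ∧
      ((∫ t in (0:ℝ)..T,
          ∑ x : Fin n → Fin (M+1),
            (∑ j, c j * (((x j : ℕ) : ℝ) * delta ^ Real.log mu - beta))
              * transientP n M lam mu qhat t x)
        = ∑ j, c j *
            ∫ t in (0:ℝ)..T,
              ∑ a : Fin (M+1),
                (((a : ℕ) : ℝ) * delta ^ Real.log mu - beta)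
                  * transientPbar M (lam j) mu qhat t a) :=
  expected_transient_aggregate_net_rewards_eq_general n M lam mu qhat i alpha m beta delta c
end
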